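/- Let n be an integer and let the abelian group G be presented by generators t, μ₁, μ₂ with relations μ₂ = a·μ₁ + b·n·μ₂ and n·μ₁ = c·μ₁ + d·n·μ₂, where a, b, c, d are integers with ad - bc = -1 and bn^2 - 2n + c = ±1. Then G ≅ ℤ (with t a free generator surviving, i.e. the subgroup generated by μ₁, μ₂ is trivial and G ≅ ℤ). -/

import Mathlib

/-!
Both relators lie in the plane `t = 0`, and their `2 × 2` minor in the `μ₁, μ₂` coordinates is
`n (ad - bc) - n + b n² + c = b n² - 2n + c = ±1`. A unimodular pair spans the whole plane, so the
relations kill `μ₁` and `μ₂` and the quotient is the free group on `t`.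
-/

open Submodule

section

variable {R : Type*} [CommRing R]

theorem span_pair_eq_ker_proj_zero {u v : Fin 3 → R} (hu : u 0 = 0) (hv : v 0 = 0)
    (hdet : IsUnit (u 1 * v 2 - u 2 * v 1)) :
    span R {u, v} = LinearMap.ker (LinearMap.proj 0 : (Fin 3 → R) →ₗ[R] R) := by
  apply le_antisymm
  · rw [span_le]
    rintro w (rfl | rfl) <;> simpa
  · intro x (hx : x 0 = 0)
    obtain ⟨δ, hδ⟩ := hdet
    rw [mem_span_pair]
    -- Cramer's rule
    refine ⟨↑δ⁻¹ * (v 2 * x 1 - v 1 * x 2), ↑δ⁻¹ * (u 1 * x 2 - u 2 * x 1), ?_⟩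
    have hδ' : (↑δ⁻¹ : R) * (u 1 * v 2 - u 2 * v 1) = 1 := by rw [← hδ, Units.inv_mul]
    funext i
    fin_cases i
    · simp [hu, hv, hx]
    · simp only [Fin.reduceFinMk, Pi.add_apply, Pi.smul_apply, smul_eq_mul]
      linear_combination x 1 * hδ'
    · simp only [Fin.reduceFinMk, Pi.add_apply, Pi.smul_apply, smul_eq_mul]
      linear_combination x 2 * hδ'

noncomputable def quotKerProjZeroEquiv :
    ((Fin 3 → R) ⧸ LinearMap.ker (LinearMap.proj 0 : (Fin 3 → R) →ₗ[R] R)) ≃ₗ[R] R :=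
  LinearMap.quotKerEquivOfSurjective _ fun r => ⟨![r, 0, 0], rfl⟩

end

/-- Let `G` be the abelian group with generators `t, μ₁, μ₂` (coordinates `0, 1, 2`
of `ℤ³`) and relations `μ₂ = a μ₁ + b n μ₂` and `n μ₁ = c μ₁ + d n μ₂`, where
`a d - b c = -1` and `b n² - 2 n + c = ±1`.  Then `G ≅ ℤ` and the images of
`μ₁` and `μ₂` in `G` are trivial. -/
theorem homology_of_sewn_up_exterior (n a b c d : ℤ) (h : a * d - b * c = -1)
    (hn : b * n ^ 2 - 2 * n + c = 1 ∨ b * n ^ 2 - 2 * n + c = -1) :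
    ∀ S : Submodule ℤ (Fin 3 → ℤ),
      S = Submodule.span ℤ { ![0, -a, 1 - b * n], ![0, n - c, -d * n] } →
      Nonempty (((Fin 3 → ℤ) ⧸ S) ≃ₗ[ℤ] ℤ) ∧
      Submodule.Quotient.mk (p := S) ![0, 1, 0] = 0 ∧
      Submodule.Quotient.mk (p := S) ![0, 0, 1] = 0 := by
  rintro S rfl
  have hdet : IsUnit (-a * (-d * n) - (1 - b * n) * (n - c)) := by
    rw [Int.isUnit_iff]
    convert hn using 2 <;> linear_combination n * h
  rw [span_pair_eq_ker_proj_zero rfl rfl hdet]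
  exact ⟨⟨quotKerProjZeroEquiv⟩, by simp [Submodule.Quotient.mk_eq_zero],
    by simp [Submodule.Quotient.mk_eq_zero]⟩
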